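/- arXiv:1808.06487 — 4 statements merged into one kernel-verified Lean document; each statement's English description precedes it below -/
import Mathlib

section
/- The number of lattice points in the polytope with vertices (0,0), (a,0), (b, q−2), (0, q−2) equals ((q−1)(a+b+1) + gcd(a−b, q−2) + 1)/2. -/
/-!
With `M = q - 2`, the quadrilateral is the trapezoid `0 ≤ x`, `0 ≤ y ≤ M`,
`M x + (a - b) y ≤ M a`, so row `y` contains `⌊(M a - (a - b) y) / M⌋ + 1` lattice points.
The floors of rows `y` and `M - y` add up to `a + b - 1`, plus `1` exactly when `M ∣ (a - b) y`,
which happens for `gcd (a - b) M + 1` values of `y ∈ [0, M]`; summing over all rows counts every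
row twice.
-/

open Finset

def trapezoid {R : Type*} [Ring R] [LE R] (A B M : R) : Set (R × R) :=
  {p | 0 ≤ p.1 ∧ 0 ≤ p.2 ∧ p.2 ≤ M ∧ M * p.1 + (A - B) * p.2 ≤ M * A}

section ConvexHull

variable {𝕜 : Type*} [Field 𝕜] [LinearOrder 𝕜] [IsStrictOrderedRing 𝕜] {A B M : 𝕜}

theorem convex_trapezoid (A B M : 𝕜) : Convex 𝕜 (trapezoid A B M) :=
  (convex_halfSpace_ge (LinearMap.fst 𝕜 𝕜 𝕜).isLinear 0).inter <|
    (convex_halfSpace_ge (LinearMap.snd 𝕜 𝕜 𝕜).isLinear 0).inter <|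
      (convex_halfSpace_le (LinearMap.snd 𝕜 𝕜 𝕜).isLinear M).inter <|
        convex_halfSpace_le
          (M • LinearMap.fst 𝕜 𝕜 𝕜 + (A - B) • LinearMap.snd 𝕜 𝕜 𝕜).isLinear (M * A)

theorem convexHull_subset_trapezoid (hA : 0 ≤ A) (hB : 0 ≤ B) (hM : 0 ≤ M) :
    convexHull 𝕜 {(0, 0), (A, 0), (B, M), (0, M)} ⊆ trapezoid A B M := by
  refine convexHull_min ?_ (convex_trapezoid A B M)
  simp only [Set.insert_subset_iff, Set.singleton_subset_iff]
  exact ⟨by simp [trapezoid, hM, mul_nonneg hM hA], by simp [trapezoid, hA, hM],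
    ⟨hB, hM, le_rfl, le_of_eq (by ring)⟩, by simp [trapezoid, hM]; nlinarith⟩

theorem trapezoid_subset_convexHull (hM : 0 < M) :
    trapezoid A B M ⊆ convexHull 𝕜 {(0, 0), (A, 0), (B, M), (0, M)} := by
  rintro ⟨x, y⟩ ⟨hx, hy, hyM, hxy⟩
  set t := y / M
  -- `c` is the width of the trapezoid at height `y`
  set c := (1 - t) * A + t * B
  have hyt : t * M = y := div_mul_cancel₀ y hM.ne'
  have hxc : x ≤ c := le_of_mul_le_mul_left (by linear_combination hxy + (A - B) * hyt) hM
  -- if `c = 0` then also `x = 0`, and the junk value `x / 0 = 0` is still a valid choice of `s`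
  set s := x / c
  have hxs : s * c = x := div_mul_cancel_of_imp fun hc => le_antisymm (hc ▸ hxc) hx
  have hs0 : 0 ≤ s := div_nonneg hx (hx.trans hxc)
  have hs1 : 0 ≤ 1 - s := sub_nonneg.2 (div_le_one_of_le₀ hxc (hx.trans hxc))
  have ht0 : 0 ≤ t := div_nonneg hy hM.le
  have ht1 : 0 ≤ 1 - t := sub_nonneg.2 (div_le_one_of_le₀ hyM hM.le)
  have hxy_eq : ((x, y) : 𝕜 × 𝕜) = (1 - t) • ((1 - s) • (0, 0) + s • (A, 0)) +
      t • ((1 - s) • (0, M) + s • (B, M)) := by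
    ext <;> simp only [Prod.smul_mk, smul_eq_mul, Prod.mk_add_mk]
    · linear_combination -hxs
    · linear_combination -hyt
  have hV := subset_convexHull 𝕜 ({(0, 0), (A, 0), (B, M), (0, M)} : Set (𝕜 × 𝕜))
  have hconv := convex_convexHull 𝕜 ({(0, 0), (A, 0), (B, M), (0, M)} : Set (𝕜 × 𝕜))
  rw [hxy_eq]
  refine hconv (hconv (hV ?_) (hV ?_) hs1 hs0 (by ring)) (hconv (hV ?_) (hV ?_) hs1 hs0 (by ring))
    ht1 ht0 (by ring) <;> simp

theorem convexHull_eq_trapezoid (hA : 0 ≤ A) (hB : 0 ≤ B) (hM : 0 < M) :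
    convexHull 𝕜 {(0, 0), (A, 0), (B, M), (0, M)} = trapezoid A B M :=
  (convexHull_subset_trapezoid hA hB hM.le).antisymm (trapezoid_subset_convexHull hM)

end ConvexHull

theorem intCast_mem_trapezoid_iff {R : Type*} [Ring R] [LinearOrder R] [IsStrictOrderedRing R]
    {A B M : ℤ} {p : ℤ × ℤ} :
    ((p.1 : R), (p.2 : R)) ∈ trapezoid (A : R) B M ↔ p ∈ trapezoid A B M := by
  simp only [trapezoid, Set.mem_ofPred_eq]
  norm_cast

section LatticeCount

variable {A B M : ℤ}

def trapezoidRowEnd (A B M y : ℤ) : ℤ := (M * A - (A - B) * y) / M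

theorem trapezoidRowEnd_add_trapezoidRowEnd_sub (hM : 0 < M) (y : ℤ) :
    trapezoidRowEnd A B M y + trapezoidRowEnd A B M (M - y) =
      A + B - 1 + if M ∣ (A - B) * y then 1 else 0 := by
  rw [trapezoidRowEnd, trapezoidRowEnd,
    show M * A - (A - B) * y = -((A - B) * y) + M * A by ring,
    show M * A - (A - B) * (M - y) = (A - B) * y + M * B by ring,
    Int.add_mul_ediv_left _ _ hM.ne', Int.add_mul_ediv_left _ _ hM.ne', Int.neg_ediv,
    Int.sign_eq_one_of_pos hM]
  split_ifs <;> ring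

theorem dvd_mul_iff_ediv_gcd_dvd (hM : 0 < M) (D y : ℤ) :
    M ∣ D * y ↔ M / Int.gcd M D ∣ y := by
  refine ⟨fun h => ?_, fun h => ?_⟩
  · refine Int.modEq_zero_iff_dvd.1 (Int.ModEq.cancel_left_div_gcd hM ?_)
    rwa [mul_zero, Int.modEq_zero_iff_dvd]
  · have := Int.mul_dvd_mul (Int.gcd_dvd_right M D) h
    rwa [Int.mul_ediv_cancel' (Int.gcd_dvd_left M D)] at this

theorem card_multiples_Icc_zero_mul {k g : ℤ} (hk : 0 < k) (hg : 0 ≤ g) :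
    (#{y ∈ Icc 0 (k * g) | k ∣ y} : ℤ) = g + 1 := by
  have : {y ∈ Icc 0 (k * g) | k ∣ y} = (Icc 0 g).image (k * ·) := by
    ext y
    simp only [mem_filter, mem_Icc, mem_image]
    constructor
    · rintro ⟨⟨h0, hle⟩, j, rfl⟩
      exact ⟨j, ⟨by nlinarith, by nlinarith⟩, rfl⟩
    · rintro ⟨j, ⟨h0, hle⟩, rfl⟩
      exact ⟨⟨by nlinarith, by nlinarith⟩, dvd_mul_right k j⟩
  rw [this, card_image_of_injective _ (mul_right_injective₀ hk.ne'),
    Int.card_Icc_of_le _ _ (by omega), sub_zero]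

theorem card_filter_dvd_mul_Icc (hM : 0 < M) (D : ℤ) :
    (#{y ∈ Icc 0 M | M ∣ D * y} : ℤ) = Int.gcd D M + 1 := by
  have hg : (0 : ℤ) < Int.gcd M D := by exact_mod_cast Int.gcd_pos_of_ne_zero_left D hM.ne'
  have hk : 0 < M / Int.gcd M D := Int.ediv_pos_of_pos_of_dvd hM hg.le (Int.gcd_dvd_left M D)
  simp_rw [dvd_mul_iff_ediv_gcd_dvd hM]
  rw [Int.gcd_comm D M, ← card_multiples_Icc_zero_mul hk hg.le,
    Int.ediv_mul_cancel (Int.gcd_dvd_left M D)]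

theorem two_mul_sum_trapezoidRowEnd (hM : 0 < M) :
    2 * ∑ y ∈ Icc 0 M, trapezoidRowEnd A B M y =
      (M + 1) * (A + B - 1) + Int.gcd (A - B) M + 1 := by
  have hreflect : ∑ y ∈ Icc 0 M, trapezoidRowEnd A B M y =
      ∑ y ∈ Icc 0 M, trapezoidRowEnd A B M (M - y) :=
    sum_nbij' (M - ·) (M - ·) (by simp +contextual) (by simp +contextual) (by simp) (by simp)
      (by simp)
  calc 2 * ∑ y ∈ Icc 0 M, trapezoidRowEnd A B M y
      = ∑ y ∈ Icc 0 M, (trapezoidRowEnd A B M y + trapezoidRowEnd A B M (M - y)) := by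
        rw [two_mul, sum_add_distrib, ← hreflect]
    _ = ∑ y ∈ Icc 0 M, (A + B - 1 + if M ∣ (A - B) * y then 1 else 0) :=
        sum_congr rfl fun y _ => trapezoidRowEnd_add_trapezoidRowEnd_sub hM y
    _ = (M + 1) * (A + B - 1) + Int.gcd (A - B) M + 1 := by
        rw [sum_add_distrib, sum_const, sum_boole, nsmul_eq_mul,
          Int.card_Icc_of_le _ _ (by omega), card_filter_dvd_mul_Icc hM]
        ring

theorem trapezoid_eq_biUnion (hM : 0 < M) :
    trapezoid A B M = ↑((Icc 0 M).biUnion fun y => Icc 0 (trapezoidRowEnd A B M y) ×ˢ {y}) := by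
  ext ⟨x, y⟩
  simp only [trapezoid, trapezoidRowEnd, Set.mem_ofPred_eq, coe_biUnion, coe_product, coe_Icc,
    coe_singleton, Set.mem_iUnion, Set.mem_prod, Set.mem_Icc, Set.mem_singleton_iff,
    Int.le_ediv_iff_mul_le hM]
  constructor
  · rintro ⟨hx, hy, hyM, hxy⟩
    exact ⟨y, ⟨hy, hyM⟩, ⟨hx, by linarith⟩, rfl⟩
  · rintro ⟨y, ⟨hy, hyM⟩, ⟨hx, hxy⟩, rfl⟩
    exact ⟨hx, hy, hyM, by linarith⟩

theorem two_mul_ncard_trapezoid (hA : 0 ≤ A) (hB : 0 ≤ B) (hM : 0 < M) :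
    2 * ((trapezoid A B M).ncard : ℤ) = (M + 1) * (A + B + 1) + Int.gcd (A - B) M + 1 := by
  have hrow : ∀ y ∈ Icc 0 M,
      (#(Icc 0 (trapezoidRowEnd A B M y) ×ˢ {y}) : ℤ) = trapezoidRowEnd A B M y + 1 := by
    intro y hy
    rw [mem_Icc] at hy
    have : 0 ≤ trapezoidRowEnd A B M y := Int.ediv_nonneg (by nlinarith) hM.le
    rw [card_product, card_singleton, mul_one, Int.card_Icc_of_le _ _ (by omega), sub_zero]
  have hdisj : (Icc 0 M : Set ℤ).PairwiseDisjoint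
      fun y => Icc 0 (trapezoidRowEnd A B M y) ×ˢ {y} := by
    intro y _ y' _ hne
    simp only [Function.onFun, disjoint_left, mem_product, mem_singleton]
    rintro p ⟨_, rfl⟩ ⟨_, h⟩
    exact hne h
  rw [trapezoid_eq_biUnion hM, Set.ncard_coe_finset, card_biUnion hdisj, Nat.cast_sum,
    sum_congr rfl hrow, sum_add_distrib, mul_add, two_mul_sum_trapezoidRowEnd hM, sum_const,
    nsmul_one, Int.card_Icc_of_le _ _ (by omega)]
  ring

end LatticeCount

theorem quadrilateral_lattice_points_general (q a b : ℕ) (hq : 3 ≤ q)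
    (hba : b ≤ a) :
    Set.ncard {p : ℤ × ℤ |
        ((p.1 : ℝ), (p.2 : ℝ)) ∈
          convexHull ℝ {((0 : ℝ), (0 : ℝ)), ((a : ℝ), 0), ((b : ℝ), (q : ℝ) - 2),
            (0, (q : ℝ) - 2)}} =
      ((q - 1) * (a + b + 1) + Nat.gcd (a - b) (q - 2) + 1) / 2 := by
  have hM : (0 : ℤ) < (q : ℤ) - 2 := by omega
  have hhull : convexHull ℝ {((0 : ℝ), (0 : ℝ)), ((a : ℝ), 0), ((b : ℝ), (q : ℝ) - 2),
      (0, (q : ℝ) - 2)} =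
        trapezoid ((a : ℤ) : ℝ) ((b : ℤ) : ℝ) (((q : ℤ) - 2 : ℤ) : ℝ) := by
    push_cast
    exact convexHull_eq_trapezoid (Nat.cast_nonneg a) (Nat.cast_nonneg b) (by exact_mod_cast hM)
  simp_rw [hhull, intCast_mem_trapezoid_iff, Set.ofPred_mem_eq]
  have hcount := two_mul_ncard_trapezoid (Int.natCast_nonneg a) (Int.natCast_nonneg b) hM
  have hgcd : Int.gcd ((a : ℤ) - b) ((q : ℤ) - 2) = Nat.gcd (a - b) (q - 2) := by
    rw [← Nat.cast_sub hba, ← Int.gcd_natCast_natCast]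
    congr
    omega
  have htwice : 2 * (trapezoid (a : ℤ) b ((q : ℤ) - 2)).ncard =
      (q - 1) * (a + b + 1) + Nat.gcd (a - b) (q - 2) + 1 := by
    zify [show 1 ≤ q by omega]
    rw [← hgcd, hcount]
    ring
  omega

/-- The number of lattice points in the polytope with vertices
`(0,0), (a,0), (b,q−2), (0,q−2)` (with `0 ≤ b ≤ a ≤ q−2`) equals
`((q−1)(a+b+1) + gcd(a−b, q−2) + 1)/2`. -/
theorem quadrilateral_lattice_points (q a b : ℕ) (hq : 3 ≤ q)
    (hba : b ≤ a) (haq : a ≤ q - 2) :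
    Set.ncard {p : ℤ × ℤ |
        ((p.1 : ℝ), (p.2 : ℝ)) ∈
          convexHull ℝ {((0 : ℝ), (0 : ℝ)), ((a : ℝ), 0), ((b : ℝ), (q : ℝ) - 2),
            (0, (q : ℝ) - 2)}} =
      ((q - 1) * (a + b + 1) + Nat.gcd (a - b) (q - 2) + 1) / 2 :=
  quadrilateral_lattice_points_general q a b hq hba
end

section
/- A nonzero polynomial f in the F_q-span of the monomials x^i y^j with (i,j) in the lattice points of the polytope with vertices (0,0),(a,0),(b,q−2),(0,q−2) (0 ≤ b ≤ a ≤ q−2) has at most (q−1)² − (q−1−a) zeros on the torus (F_q*)². -/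
/-!
Bound the zeros of `f` on any grid `S₀ × ⋯ × Sₙ₋₁` by `∏ |Sᵢ| - ∏ (|Sᵢ| - degᵢ f)`, by
induction on `n`: write `f` as a polynomial in `x₀` whose leading coefficient `c` lies in the
remaining variables. Over a point of the remaining grid where `c` does not vanish, `f` has at
most `deg₀ f` zeros; by induction `c` is nonzero at `∏ (|Sᵢ| - degᵢ c) ≥ ∏_{i > 0} (|Sᵢ| - degᵢ f)`
of those points.

On the torus `(F_q^*)²` the exponents in the polytope give `deg_x f ≤ a` and `deg_y f ≤ q - 2`,
so the second factor is at least `1` and `f` has at most `(q-1)² - (q-1-a)` zeros.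
-/

open MvPolynomial

/-- Evaluation of a two-variable polynomial at all points of the torus `(Fˣ)²`. -/
noncomputable def torusEval (F : Type*) [Field F] :
    MvPolynomial (Fin 2) F →ₗ[F] (Fˣ × Fˣ → F) :=
  LinearMap.pi fun t : Fˣ × Fˣ =>
    (MvPolynomial.aeval fun i : Fin 2 => if i = 0 then (t.1 : F) else (t.2 : F)).toLinearMap

/-- The lattice points of the polytope with vertices `(0,0), (a,0), (b,q−2), (0,q−2)`. -/
def latticeU (q a b : ℕ) : Set (ℕ × ℕ) :=
  {u : ℕ × ℕ | ((u.1 : ℝ), (u.2 : ℝ)) ∈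
    convexHull ℝ {((0 : ℝ), (0 : ℝ)), ((a : ℝ), 0), ((b : ℝ), (q : ℝ) - 2),
      (0, (q : ℝ) - 2)}}

open Finset Fintype

theorem Finset.card_filter_product_add_mul_le {α β : Type*} (s : Finset α) (t : Finset β)
    (P : α → β → Prop) [∀ x y, Decidable (P x y)] (Q : β → Prop) [DecidablePred Q] {d : ℕ}
    (hd : ∀ y ∈ t, ¬ Q y → #{x ∈ s | P x y} ≤ d) :
    #{p ∈ s ×ˢ t | P p.1 p.2} + #{y ∈ t | ¬ Q y} * (#s - d) ≤ #s * #t := by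
  have hfibres : #{p ∈ s ×ˢ t | P p.1 p.2} = ∑ y ∈ t, #{x ∈ s | P x y} := by
    rw [card_filter, sum_product_right]
    simp only [card_filter]
  rw [hfibres, card_filter, sum_mul, ← sum_add_distrib, mul_comm, ← smul_eq_mul, ← sum_const]
  refine sum_le_sum fun y hy => ?_
  by_cases hQ : Q y
  · simpa [hQ] using card_filter_le s (P · y)
  · have := hd y hy hQ
    have := card_filter_le s (P · y)
    simp only [hQ, not_false_eq_true, if_true, one_mul]
    omega

theorem Fin.card_filter_piFinset_eq_card_filter_product {n : ℕ} {α : Type*}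
    (S : Fin (n + 1) → Finset α) (P : (Fin (n + 1) → α) → Prop) [DecidablePred P] :
    #{x ∈ piFinset S | P x} = #{p ∈ S 0 ×ˢ piFinset (tail S) | P (cons p.1 p.2)} := by
  refine card_nbij' (fun x => (x 0, tail x)) (fun p => cons p.1 p.2) ?_ ?_ ?_ ?_
  · intro x hx
    simp_all only [coe_filter, Set.mem_ofPred_eq, mem_piFinset_iff_zero_tail, mem_product,
      cons_self_tail, and_self]
  · rintro ⟨x₀, xₜ⟩ h
    simp_all only [coe_filter, Set.mem_ofPred_eq, mem_piFinset_iff_zero_tail, mem_product,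
      cons_zero, tail_cons, and_self]
  · intro x _
    simp
  · rintro ⟨x₀, xₜ⟩ _
    simp

theorem Polynomial.card_filter_eval_eq_zero_le {R : Type*} [CommRing R] [IsDomain R]
    [DecidableEq R] {p : Polynomial R} (hp : p ≠ 0) (s : Finset R) :
    #{x ∈ s | p.eval x = 0} ≤ p.natDegree :=
  card_le_degree_of_subset_roots fun x hx => by
    rw [mem_roots hp]
    exact (mem_filter.mp hx).2

namespace MvPolynomial

variable {R : Type*} [CommRing R] [IsDomain R] [DecidableEq R]

theorem card_filter_eval_cons_eq_zero_le {n : ℕ} (f : MvPolynomial (Fin (n + 1)) R)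
    {xₜ : Fin n → R} (hxₜ : eval xₜ (finSuccEquiv R n f).leadingCoeff ≠ 0) (s : Finset R) :
    #{x₀ ∈ s | eval (Fin.cons x₀ xₜ) f = 0} ≤ f.degreeOf 0 := by
  set g := (finSuccEquiv R n f).map (eval xₜ)
  have hg : g ≠ 0 := by
    rw [← Polynomial.leadingCoeff_ne_zero,
      Polynomial.leadingCoeff_map_of_leadingCoeff_ne_zero _ hxₜ]
    exact hxₜ
  calc #{x₀ ∈ s | eval (Fin.cons x₀ xₜ) f = 0}
      = #{x₀ ∈ s | g.eval x₀ = 0} := by simp only [eval_eq_eval_mv_eval', g]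
    _ ≤ g.natDegree := Polynomial.card_filter_eval_eq_zero_le hg s
    _ = f.degreeOf 0 := by
      rw [Polynomial.natDegree_map_of_leadingCoeff_ne_zero _ hxₜ, natDegree_finSuccEquiv]

theorem card_zeros_add_prod_card_sub_degreeOf_le {n : ℕ} {f : MvPolynomial (Fin n) R}
    (hf : f ≠ 0) (S : Fin n → Finset R) :
    #{x ∈ piFinset S | eval x f = 0} + ∏ i, (#(S i) - f.degreeOf i) ≤ ∏ i, #(S i) := by
  induction n with
  | zero =>
    obtain ⟨c, rfl⟩ : ∃ c, f = C c := ⟨_, f.eq_C_of_isEmpty⟩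
    simp [C_ne_zero.mp hf]
  | succ n ih =>
    set lc := (finSuccEquiv R n f).leadingCoeff
    have hlc : lc ≠ 0 := by simpa [lc] using hf
    set T := piFinset (Fin.tail S)
    have hfibres := card_filter_product_add_mul_le (S 0) T
      (fun x₀ xₜ => eval (Fin.cons x₀ xₜ) f = 0) (fun xₜ => eval xₜ lc = 0) (d := f.degreeOf 0)
      fun xₜ _ hxₜ => card_filter_eval_cons_eq_zero_le f hxₜ (S 0)
    have hbad := ih hlc (Fin.tail S)
    have hgood :
        ∏ i : Fin n, (#(S i.succ) - f.degreeOf i.succ) ≤ #{xₜ ∈ T | ¬ eval xₜ lc = 0} := by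
      have hsplit := card_filter_add_card_filter_not (s := T) (fun xₜ => eval xₜ lc = 0)
      have hdeg : ∏ i : Fin n, (#(S i.succ) - f.degreeOf i.succ) ≤
          ∏ i, (#(Fin.tail S i) - lc.degreeOf i) :=
        prod_le_prod' fun i _ => Nat.sub_le_sub_left (degreeOf_coeff_finSuccEquiv f i _) _
      simp only [card_piFinset, T] at hsplit hbad ⊢
      omega
    rw [Fin.card_filter_piFinset_eq_card_filter_product, Fin.prod_univ_succ, Fin.prod_univ_succ]
    calc _ ≤ #{p ∈ S 0 ×ˢ T | eval (Fin.cons p.1 p.2) f = 0}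
          + (#(S 0) - f.degreeOf 0) * #{xₜ ∈ T | ¬ eval xₜ lc = 0} := by gcongr
      _ ≤ _ := by simpa [T, mul_comm, Fin.tail] using hfibres

end MvPolynomial

theorem MvPolynomial.support_subset_of_mem_span_monomials {R : Type*} [CommSemiring R]
    {U : Set (ℕ × ℕ)} {f : MvPolynomial (Fin 2) R}
    (hf : f ∈ Submodule.span R {m | ∃ u ∈ U, m = X 0 ^ u.1 * X 1 ^ u.2}) :
    ∀ d ∈ f.support, (d 0, d 1) ∈ U := by
  have hle : Submodule.span R {m : MvPolynomial (Fin 2) R | ∃ u ∈ U, m = X 0 ^ u.1 * X 1 ^ u.2} ≤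
      restrictSupport R {d | (d 0, d 1) ∈ U} := by
    rw [Submodule.span_le]
    rintro _ ⟨u, hu, rfl⟩
    rw [X_pow_eq_monomial, X_pow_eq_monomial, monomial_mul, one_mul, SetLike.mem_coe,
      monomial_mem_restrictSupport]
    left
    simpa using hu
  exact fun d hd => (mem_restrictSupport_iff R).mp (hle hf) hd

theorem latticeU_subset {q a b : ℕ} (hq : 2 ≤ q) (hba : b ≤ a) :
    latticeU q a b ⊆ {u | u.1 ≤ a ∧ u.2 ≤ q - 2} := by
  intro u hu
  have hbox := convexHull_min (t := Set.Iic ((a : ℝ), (q : ℝ) - 2)) ?_ (convex_Iic _) hu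
  · simp only [Set.mem_Iic, Prod.mk_le_mk] at hbox
    constructor
    · exact_mod_cast hbox.1
    · have : (u.2 : ℝ) + 2 ≤ q := by linarith [hbox.2]
      have : u.2 + 2 ≤ q := by exact_mod_cast this
      omega
  · have hq' : (2 : ℝ) ≤ q := by exact_mod_cast hq
    have hba' : (b : ℝ) ≤ a := by exact_mod_cast hba
    simp only [Set.insert_subset_iff, Set.singleton_subset_iff, Set.mem_Iic, Prod.mk_le_mk]
    refine ⟨⟨?_, ?_⟩, ⟨?_, ?_⟩, ⟨?_, ?_⟩, ⟨?_, ?_⟩⟩ <;> first | positivity | linarith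

theorem card_torusEval_eq_zero {F : Type*} [Field F] [Fintype F] [DecidableEq F]
    (f : MvPolynomial (Fin 2) F) :
    #{t : Fˣ × Fˣ | torusEval F f t = 0} =
      #{x ∈ piFinset fun _ : Fin 2 => ({0}ᶜ : Finset F) | eval x f = 0} := by
  refine card_bij (fun t _ i => if i = 0 then (t.1 : F) else t.2) ?_ ?_ ?_
  · rintro t ht
    simp only [mem_filter, mem_univ, true_and] at ht
    refine mem_filter.mpr ⟨?_, ?_⟩
    · simp only [mem_piFinset, mem_compl, mem_singleton]
      intro i
      split_ifs <;> simp
    · simpa [torusEval, coe_aeval_eq_eval] using ht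
  · intro s _ t _ h
    have h0 := congrFun h 0
    have h1 := congrFun h 1
    simp only [if_pos, one_ne_zero, if_false] at h0 h1
    exact Prod.ext (Units.ext h0) (Units.ext h1)
  · intro x hx
    simp only [mem_filter, mem_piFinset, mem_compl, mem_singleton] at hx
    have hx' : (fun i : Fin 2 => if i = 0 then x 0 else x 1) = x := by
      funext i
      fin_cases i <;> rfl
    refine ⟨(Units.mk0 _ (hx.1 0), Units.mk0 _ (hx.1 1)), ?_, ?_⟩
    · refine mem_filter.mpr ⟨mem_univ _, ?_⟩
      simpa [torusEval, coe_aeval_eq_eval, hx'] using hx.2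
    · exact hx'

theorem toric_zero_bound_general (F : Type*) [Field F] [Fintype F] [DecidableEq F] (a b : ℕ)
    (hba : b ≤ a)
    (f : MvPolynomial (Fin 2) F)
    (hf : f ∈ Submodule.span F
      {m : MvPolynomial (Fin 2) F | ∃ u ∈ latticeU (Fintype.card F) a b,
        m = X 0 ^ u.1 * X 1 ^ u.2})
    (hf0 : f ≠ 0) :
    (Finset.univ.filter fun t : Fˣ × Fˣ => torusEval F f t = 0).card ≤
      (Fintype.card F - 1) ^ 2 - (Fintype.card F - 1 - a) := by
  set q := Fintype.card F
  have hq : 2 ≤ q := Fintype.one_lt_card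
  have hbox : ∀ d ∈ f.support, d 0 ≤ a ∧ d 1 ≤ q - 2 := fun d hd =>
    latticeU_subset hq hba (support_subset_of_mem_span_monomials hf d hd)
  have hdeg₀ : f.degreeOf 0 ≤ a := degreeOf_le_iff.mpr fun d hd => (hbox d hd).1
  have hdeg₁ : f.degreeOf 1 ≤ q - 2 := degreeOf_le_iff.mpr fun d hd => (hbox d hd).2
  have hunits : #({0}ᶜ : Finset F) = q - 1 := by rw [card_compl, card_singleton]
  have hzeros := card_zeros_add_prod_card_sub_degreeOf_le hf0 fun _ => ({0}ᶜ : Finset F)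
  rw [Fin.prod_univ_two, Fin.prod_univ_two, hunits] at hzeros
  have hprod : (q - 1 - a) * 1 ≤ (q - 1 - f.degreeOf 0) * (q - 1 - f.degreeOf 1) :=
    Nat.mul_le_mul (by omega) (by omega)
  rw [card_torusEval_eq_zero, sq]
  omega

/-- A nonzero polynomial in the span of the monomials with exponents in the polytope
with vertices `(0,0),(a,0),(b,q−2),(0,q−2)` has at most `(q−1)² − (q−1−a)` zeros on
the torus `(Fˣ)²`. -/
theorem toric_zero_bound (F : Type*) [Field F] [Fintype F] [DecidableEq F] (a b : ℕ)
    (hba : b ≤ a) (haq : a ≤ Fintype.card F - 2)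
    (f : MvPolynomial (Fin 2) F)
    (hf : f ∈ Submodule.span F
      {m : MvPolynomial (Fin 2) F | ∃ u ∈ latticeU (Fintype.card F) a b,
        m = X 0 ^ u.1 * X 1 ^ u.2})
    (hf0 : f ≠ 0) :
    (Finset.univ.filter fun t : Fˣ × Fˣ => torusEval F f t = 0).card ≤
      (Fintype.card F - 1) ^ 2 - (Fintype.card F - 1 - a) :=
  toric_zero_bound_general F a b hba f hf hf0
end

section
/- The toric code C_□ associated to the polytope with vertices (0,0),(a,0),(b,q−2),(0,q−2), with 0 ≤ b ≤ a ≤ q−2, has length (q−1)², dimension ((q−1)(a+b+1)+gcd(a−b,q−2)+1)/2, and minimum distance at least q−1−a. -/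
open MvPolynomial

/-- The toric code associated to the lattice points `U`: the image under evaluation at
all points of the torus of the span of the monomials with exponents in `U`. -/
noncomputable def toricCode (F : Type*) [Field F] (U : Set (ℕ × ℕ)) :
    Submodule F (Fˣ × Fˣ → F) :=
  Submodule.map (torusEval F)
    (Submodule.span F {m : MvPolynomial (Fin 2) F | ∃ u ∈ U, m = X 0 ^ u.1 * X 1 ^ u.2})

/-! The lattice points of the trapezoid are the `(i, j)` with `0 ≤ j ≤ n := q - 2` and
`i ≤ b + ⌊(a - b)(n - j) / n⌋`. Pairing row `j` with row `n - j` gives `a + b + 1` points plus one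
more exactly when `n ∣ (a - b) j`, which happens for `gcd (a - b) n + 1` values of `j ∈ [0, n]`.
All exponents are `< q - 1`, so the monomials restrict to pairwise distinct characters of
`(F_q^*)²`, which are linearly independent by Dedekind's lemma: the dimension is the number of
lattice points. A nonzero codeword is nonzero at some `(ξ₀, η)`; on the row `y = η` it is a nonzero
polynomial in `x` of degree `≤ a`, so it vanishes at most `a` times among the `q - 1` points of
that row. -/

open Finset

theorem Nat.div_add_mul_sub_div {n d t : ℕ} (hn : 0 < n) (ht : t ≤ d * n) :
    t / n + (d * n - t) / n + 1 = d + if n ∣ t then 1 else 0 := by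
  zify [ht]
  rw [sub_eq_neg_add, Int.add_mul_ediv_right _ _ (by positivity), Int.neg_ediv]
  split_ifs <;> simp [Int.sign_eq_one_of_pos (by positivity : (0 : ℤ) < n), *]
  ring

theorem Nat.card_filter_range_succ_dvd (N m : ℕ) : #{k ∈ range (N + 1) | m ∣ k} = N / m + 1 := by
  rw [← Nat.card_multiples', ← card_insert_of_notMem (a := 0) (by simp)]
  congr 1
  ext k
  by_cases hk : k = 0 <;> simp [hk]

theorem Nat.card_filter_range_succ_dvd_mul {n : ℕ} (d : ℕ) (hn : 0 < n) :
    #{j ∈ range (n + 1) | n ∣ d * j} = Nat.gcd d n + 1 := by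
  obtain ⟨d', m, hcop, hd, hnm⟩ := Nat.exists_coprime d n
  set g := Nat.gcd d n
  have hg : 0 < g := Nat.gcd_pos_of_pos_right d hn
  have hdvd : ∀ j, n ∣ d * j ↔ m ∣ j := fun j => by
    rw [hd, hnm, mul_comm m, mul_right_comm, mul_comm _ g, Nat.mul_dvd_mul_iff_left hg,
      hcop.symm.dvd_mul_left]
  simp_rw [hdvd, Nat.card_filter_range_succ_dvd, hnm]
  rw [Nat.mul_div_cancel_left _ (Nat.pos_of_mul_pos_right (hnm ▸ hn))]

def trapezoidPoints (n a b : ℕ) : Finset (ℕ × ℕ) :=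
  {u ∈ range (a + 1) ×ˢ range (n + 1) | u.1 * n + (a - b) * u.2 ≤ a * n}

theorem le_of_mem_trapezoidPoints {n a b : ℕ} {u : ℕ × ℕ} (hu : u ∈ trapezoidPoints n a b) :
    u.1 ≤ a ∧ u.2 ≤ n := by
  simp only [trapezoidPoints, mem_filter, mem_product, mem_range] at hu
  omega

theorem sum_mul_div_add_sum_mul_sub_div {n : ℕ} (d : ℕ) (hn : 0 < n) :
    ∑ j ∈ range (n + 1), d * j / n + ∑ j ∈ range (n + 1), d * (n - j) / n + (n + 1) =
      (n + 1) * d + Nat.gcd d n + 1 := by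
  calc _ = ∑ j ∈ range (n + 1), (d * j / n + (d * n - d * j) / n + 1) := by
        simp [sum_add_distrib, Nat.mul_sub]
    _ = ∑ j ∈ range (n + 1), (d + if n ∣ d * j then 1 else 0) := by
        refine sum_congr rfl fun j hj => Nat.div_add_mul_sub_div hn ?_
        exact Nat.mul_le_mul_left d (by simpa [Nat.lt_succ_iff] using hj)
    _ = _ := by
        rw [sum_add_distrib, sum_boole, Nat.card_filter_range_succ_dvd_mul d hn]
        simp [add_assoc]

theorem card_trapezoidPoints_row {n b d j : ℕ} (hn : 0 < n) (hj : j ≤ n) :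
    #{i ∈ range (b + d + 1) | i * n + d * j ≤ (b + d) * n} = b + d * (n - j) / n + 1 := by
  have hjn : d * j ≤ d * n := Nat.mul_le_mul_left d hj
  have hle : d * (n - j) / n ≤ d :=
    Nat.div_le_of_le_mul (by rw [mul_comm n]; exact Nat.mul_le_mul_left d (Nat.sub_le n j))
  have hiff : ∀ i, i * n + d * j ≤ (b + d) * n ↔ i ≤ b + d * (n - j) / n := fun i => by
    rw [add_comm b (d * (n - j) / n), ← Nat.add_mul_div_right _ _ hn,
      Nat.le_div_iff_mul_le hn, Nat.mul_sub, add_mul]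
    omega
  rw [← card_range (b + d * (n - j) / n + 1)]
  congr 1
  ext i
  simp only [mem_filter, mem_range, hiff]
  omega

theorem card_trapezoidPoints {n a b : ℕ} (hba : b ≤ a) :
    #(trapezoidPoints n a b) = ((n + 1) * (a + b + 1) + Nat.gcd (a - b) n + 1) / 2 := by
  rcases n.eq_zero_or_pos with rfl | hn
  · have : trapezoidPoints 0 a b = range (a + 1) ×ˢ range 1 := filter_true_of_mem (by simp)
    simp [this]
    omega
  obtain ⟨d, rfl⟩ := Nat.exists_eq_add_of_le hba
  have hcard : #(trapezoidPoints n (b + d) b) =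
      ∑ j ∈ range (n + 1), (b + d * (n - j) / n + 1) := by
    rw [trapezoidPoints, Nat.add_sub_cancel_left, card_filter, sum_product_right]
    refine sum_congr rfl fun j hj => ?_
    rw [← card_filter, card_trapezoidPoints_row hn (Nat.lt_succ_iff.mp (mem_range.mp hj))]
  have hreflect : ∑ j ∈ range (n + 1), d * (n - j) / n = ∑ j ∈ range (n + 1), d * j / n := by
    simpa using sum_range_reflect (fun j => d * j / n) (n + 1)
  have hpair := sum_mul_div_add_sum_mul_sub_div d hn
  rw [sum_add_distrib, sum_add_distrib, sum_const, sum_const, card_range, smul_eq_mul,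
    smul_eq_mul, mul_one] at hcard
  rw [Nat.add_sub_cancel_left]
  have : (n + 1) * (b + d + b + 1) = (n + 1) * b + (n + 1) * b + (n + 1) * d + (n + 1) := by ring
  omega

theorem convexHull_trapezoid_subset {a b n : ℝ} (hb : 0 ≤ b) (hba : b ≤ a) (hn : 0 ≤ n) :
    convexHull ℝ {(0, 0), (a, 0), (b, n), (0, n)} ⊆
      {p : ℝ × ℝ | 0 ≤ p.1 ∧ p.1 ≤ a ∧ 0 ≤ p.2 ∧ p.2 ≤ n ∧ p.1 * n + (a - b) * p.2 ≤ a * n} := by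
  refine convexHull_min ?_ ?_
  · rintro p (rfl | rfl | rfl | rfl) <;> refine ⟨?_, ?_, ?_, ?_, ?_⟩ <;> dsimp only <;> nlinarith
  · rintro p ⟨hp1, hpa, hp2, hpn, hp⟩ q ⟨hq1, hqa, hq2, hqn, hq⟩ s t hs ht hst
    obtain rfl : t = 1 - s := by linarith
    simp only [Set.mem_ofPred_eq, Prod.fst_add, Prod.snd_add, Prod.smul_fst, Prod.smul_snd,
      smul_eq_mul]
    refine ⟨?_, ?_, ?_, ?_, ?_⟩ <;>
      nlinarith [mul_le_mul_of_nonneg_left hp hs, mul_le_mul_of_nonneg_left hq ht]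

theorem mem_convexHull_trapezoid {a b n x y : ℝ} (hx : 0 ≤ x) (hxa : x ≤ a) (hy : 0 ≤ y)
    (hyn : y ≤ n) (h : x * n + (a - b) * y ≤ a * n) :
    (x, y) ∈ convexHull ℝ {(0, 0), (a, 0), (b, n), (0, n)} := by
  -- `(x, y)` lies between `(0, y)` on the left edge and `(r, y)` on the right edge, both of
  -- which divide their edge in the ratio `s = y / n`.
  set K := convexHull ℝ {((0 : ℝ), (0 : ℝ)), (a, 0), (b, n), (0, n)}
  have combo : ∀ p ∈ K, ∀ q ∈ K, ∀ θ : ℝ, 0 ≤ θ → θ ≤ 1 → (1 - θ) • p + θ • q ∈ K :=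
    fun p hp q hq θ h0 h1 => convex_convexHull ℝ _ hp hq (by linarith) h0 (by ring)
  have vertex : ∀ p ∈ ({((0 : ℝ), (0 : ℝ)), (a, 0), (b, n), (0, n)} : Set (ℝ × ℝ)), p ∈ K :=
    fun p hp => subset_convexHull ℝ _ hp
  set s := y / n
  have hs0 : 0 ≤ s := div_nonneg hy (hy.trans hyn)
  have hs1 : s ≤ 1 := div_le_one_of_le₀ hyn (hy.trans hyn)
  have hys : s * n = y := by
    rcases (hy.trans hyn).eq_or_lt with hn | hn
    · simp [← hn] at hyn ⊢; linarith
    · exact div_mul_cancel₀ y hn.ne'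
  set r := a - s * (a - b)
  have hxr : x ≤ r := by
    rcases (hy.trans hyn).eq_or_lt with hn | hn
    · simp [r, s, ← hn, hxa]
    · have : r * n = a * n - (a - b) * y := by rw [← hys]; ring
      nlinarith
  have hL : ((0 : ℝ), y) ∈ K := by
    convert combo _ (vertex (0, 0) (by simp)) _ (vertex (0, n) (by simp)) s hs0 hs1 using 1
    ext <;> simp [hys]
  have hR : (r, y) ∈ K := by
    convert combo _ (vertex (a, 0) (by simp)) _ (vertex (b, n) (by simp)) s hs0 hs1 using 1
    ext <;> simp [hys, r]; ring
  convert combo _ hL _ hR (x / r) (div_nonneg hx (hx.trans hxr))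
    (div_le_one_of_le₀ hxr (hx.trans hxr)) using 1
  rcases (hx.trans hxr).eq_or_lt with hr | hr
  · ext <;> simp [← hr]; linarith
  · ext <;> simp [div_mul_cancel₀ x hr.ne']; ring

theorem mem_convexHull_trapezoid_iff {a b n x y : ℝ} (hb : 0 ≤ b) (hba : b ≤ a) (hn : 0 ≤ n) :
    (x, y) ∈ convexHull ℝ {(0, 0), (a, 0), (b, n), (0, n)} ↔
      0 ≤ x ∧ x ≤ a ∧ 0 ≤ y ∧ y ≤ n ∧ x * n + (a - b) * y ≤ a * n :=
  ⟨fun h => convexHull_trapezoid_subset hb hba hn h,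
    fun ⟨hx, hxa, hy, hyn, h⟩ => mem_convexHull_trapezoid hx hxa hy hyn h⟩

theorem latticeU_eq_trapezoidPoints {q a b : ℕ} (hba : b ≤ a) (hq : 2 ≤ q) :
    latticeU q a b = trapezoidPoints (q - 2) a b := by
  have hn : (q : ℝ) - 2 = ((q - 2 : ℕ) : ℝ) := by rw [Nat.cast_sub hq]; norm_num
  have hd : (a : ℝ) - b = ((a - b : ℕ) : ℝ) := by rw [Nat.cast_sub hba]
  ext ⟨i, j⟩
  simp only [latticeU, Set.mem_ofPred_eq, hn, mem_convexHull_trapezoid_iff (Nat.cast_nonneg b)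
    (Nat.cast_le.mpr hba) (Nat.cast_nonneg (q - 2)), hd, trapezoidPoints, coe_filter, mem_product,
    mem_range, Nat.lt_succ_iff]
  norm_cast
  simp only [zero_le, true_and, and_assoc]

def torusChar (F : Type*) [Field F] (u : ℕ × ℕ) : Fˣ × Fˣ →* F where
  toFun t := (t.1 : F) ^ u.1 * (t.2 : F) ^ u.2
  map_one' := by simp
  map_mul' t s := by simp only [Prod.fst_mul, Prod.snd_mul, Units.val_mul, mul_pow]; ring

section

variable {F : Type*} [Field F]

theorem torusEval_monomial (i j : ℕ) :
    torusEval F (X 0 ^ i * X 1 ^ j) = torusChar F (i, j) := by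
  ext t
  simp [torusEval, torusChar]

theorem toricCode_eq_span (U : Set (ℕ × ℕ)) :
    toricCode F U = Submodule.span F ((fun u => ⇑(torusChar F u)) '' U) := by
  rw [toricCode, Submodule.map_span]
  congr 1
  ext c
  simp [torusEval_monomial]

theorem torusEval_apply_mk (f : MvPolynomial (Fin 2) F) (ξ η : Fˣ) :
    torusEval F f (ξ, η) = (aeval ![Polynomial.X, Polynomial.C (η : F)] f).eval (ξ : F) := by
  rw [← Polynomial.coe_aeval_eq_eval, ← AlgHom.comp_apply, MvPolynomial.comp_aeval]
  refine congrArg (fun g => aeval g f) (funext fun i => ?_)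
  fin_cases i <;> simp

theorem natDegree_aeval_X_C_le {U : Set (ℕ × ℕ)} {a : ℕ} (hU : ∀ u ∈ U, u.1 ≤ a)
    {f : MvPolynomial (Fin 2) F}
    (hf : f ∈ Submodule.span F {m | ∃ u ∈ U, m = X 0 ^ u.1 * X 1 ^ u.2}) (c : F) :
    (aeval ![Polynomial.X, Polynomial.C c] f).natDegree ≤ a := by
  suffices Submodule.span F {m | ∃ u ∈ U, m = X 0 ^ u.1 * X 1 ^ u.2} ≤
      (Polynomial.degreeLE F a).comap (aeval ![Polynomial.X, Polynomial.C c]).toLinearMap from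
    Polynomial.natDegree_le_iff_degree_le.mpr (Polynomial.mem_degreeLE.mp (this hf))
  rw [Submodule.span_le]
  rintro _ ⟨u, hu, rfl⟩
  simp only [SetLike.mem_coe, Submodule.mem_comap, AlgHom.toLinearMap_apply, map_mul, map_pow,
    aeval_X, Matrix.cons_val_zero, Matrix.cons_val_one, Polynomial.mem_degreeLE]
  rw [← Polynomial.C_pow, mul_comm]
  exact (Polynomial.degree_C_mul_X_pow_le _ _).trans (by exact_mod_cast hU u hu)

variable [Fintype F]

theorem torusChar_injOn :
    Set.InjOn (torusChar F) {u | u.1 < Fintype.card F - 1 ∧ u.2 < Fintype.card F - 1} := by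
  classical
  obtain ⟨g, hg⟩ := IsCyclic.exists_ofOrder_eq_natCard (α := Fˣ)
  rw [Nat.card_eq_fintype_card, Fintype.card_units, ← orderOf_units] at hg
  intro u ⟨hu1, hu2⟩ v ⟨hv1, hv2⟩ huv
  have h1 := DFunLike.congr_fun huv (g, 1)
  have h2 := DFunLike.congr_fun huv (1, g)
  simp only [torusChar, MonoidHom.coe_mk, OneHom.coe_mk, Units.val_one, one_pow, mul_one,
    one_mul] at h1 h2
  rw [← hg] at hu1 hu2 hv1 hv2
  exact Prod.ext (pow_injOn_Iio_orderOf hu1 hv1 h1) (pow_injOn_Iio_orderOf hu2 hv2 h2)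

theorem finrank_toricCode {S : Finset (ℕ × ℕ)}
    (hS : ∀ u ∈ S, u.1 < Fintype.card F - 1 ∧ u.2 < Fintype.card F - 1) :
    Module.finrank F (toricCode F S) = #S := by
  have hinj : Function.Injective fun u : (S : Set (ℕ × ℕ)) => torusChar F u :=
    fun u v huv => Subtype.ext (torusChar_injOn (hS u u.2) (hS v v.2) huv)
  have hli : LinearIndependent F fun u : (S : Set (ℕ × ℕ)) => ⇑(torusChar F u) :=
    (linearIndependent_monoidHom (Fˣ × Fˣ) F).comp _ hinj
  rw [toricCode_eq_span, Set.image_eq_range, finrank_span_eq_card hli]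
  simp

theorem Polynomial.card_sub_natDegree_le_card_units_eval_ne_zero [DecidableEq F]
    {p : Polynomial F} (hp : p ≠ 0) :
    Fintype.card F - 1 - p.natDegree ≤ #{ξ : Fˣ | p.eval (ξ : F) ≠ 0} := by
  have hroots : #{ξ : Fˣ | p.eval (ξ : F) = 0} ≤ p.natDegree := by
    rw [← card_map ⟨Units.val, Units.val_injective⟩]
    refine Polynomial.card_le_degree_of_subset_roots fun x hx => ?_
    obtain ⟨ξ, hξ, rfl⟩ := mem_map.mp hx
    exact (Polynomial.mem_roots hp).mpr (mem_filter.mp hξ).2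
  have := card_filter_add_card_filter_not (s := (univ : Finset Fˣ)) (fun ξ => p.eval (ξ : F) = 0)
  rw [card_univ, Fintype.card_units] at this
  simp only [ne_eq]
  omega

theorem le_hammingNorm_of_mem_toricCode [DecidableEq F] {U : Set (ℕ × ℕ)} {a : ℕ}
    (hU : ∀ u ∈ U, u.1 ≤ a) {c : Fˣ × Fˣ → F} (hc : c ∈ toricCode F U) (hc0 : c ≠ 0) :
    Fintype.card F - 1 - a ≤ hammingNorm c := by
  obtain ⟨f, hf, rfl⟩ := hc
  obtain ⟨⟨ξ₀, η⟩, hne⟩ := Function.ne_iff.mp hc0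
  set p := aeval ![Polynomial.X, Polynomial.C (η : F)] f
  have hrow : ∀ ξ, torusEval F f (ξ, η) = p.eval (ξ : F) := fun ξ => torusEval_apply_mk f ξ η
  have hp : p ≠ 0 := fun h => hne (by rw [hrow, h, Polynomial.eval_zero]; rfl)
  calc Fintype.card F - 1 - a ≤ Fintype.card F - 1 - p.natDegree :=
        Nat.sub_le_sub_left (natDegree_aeval_X_C_le hU hf _) _
    _ ≤ #{ξ : Fˣ | p.eval (ξ : F) ≠ 0} :=
        Polynomial.card_sub_natDegree_le_card_units_eval_ne_zero hp
    _ ≤ hammingNorm (torusEval F f) := by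
        refine card_le_card_of_injOn (fun ξ => (ξ, η)) (fun ξ hξ => ?_)
          (fun ξ _ ξ' _ h => (Prod.mk.inj h).1)
        simpa [hammingNorm, hrow] using hξ

end

/-- The toric code of the polytope with vertices `(0,0),(a,0),(b,q−2),(0,q−2)`,
`0 ≤ b ≤ a ≤ q−2`, has length `(q−1)²`, dimension
`((q−1)(a+b+1)+gcd(a−b,q−2)+1)/2` and minimum distance at least `q−1−a`. -/
theorem toric_code_parameters (F : Type*) [Field F] [Fintype F] [DecidableEq F] (a b : ℕ)
    (hba : b ≤ a) (haq : a ≤ Fintype.card F - 2) :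
    Fintype.card (Fˣ × Fˣ) = (Fintype.card F - 1) ^ 2 ∧
    Module.finrank F (toricCode F (latticeU (Fintype.card F) a b)) =
      ((Fintype.card F - 1) * (a + b + 1) +
        Nat.gcd (a - b) (Fintype.card F - 2) + 1) / 2 ∧
    ∀ c ∈ toricCode F (latticeU (Fintype.card F) a b), c ≠ 0 →
      Fintype.card F - 1 - a ≤ hammingNorm c := by
  have hq : 2 ≤ Fintype.card F := Fintype.one_lt_card
  rw [latticeU_eq_trapezoidPoints hba hq]
  refine ⟨by rw [Fintype.card_prod, Fintype.card_units, sq], ?_, fun c hc hc0 => ?_⟩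
  · have hexp : ∀ u ∈ trapezoidPoints (Fintype.card F - 2) a b,
        u.1 < Fintype.card F - 1 ∧ u.2 < Fintype.card F - 1 := fun u hu => by
      have := le_of_mem_trapezoidPoints hu
      omega
    rw [finrank_toricCode hexp, card_trapezoidPoints hba, show Fintype.card F - 2 + 1 =
      Fintype.card F - 1 by omega]
  · exact le_hammingNorm_of_mem_toricCode (fun u hu => (le_of_mem_trapezoidPoints hu).1) hc hc0
end

section
/- A nonzero polynomial f in the span of monomials indexed by lattice points of the Hirzebruch polytope with vertices (0,0),(d,0),(d,e+rd),(0,e) (with d,e,e+rd < q−1) has at most max{d(q−1)+(q−1−d)e, (q−1)(e+dr)} zeros on (F_q*)². -/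
open MvPolynomial

/-- The lattice points of the Hirzebruch polytope with vertices
`(0,0), (d,0), (d,e+rd), (0,e)`. -/
def hirzU (d e r : ℕ) : Set (ℕ × ℕ) :=
  {u : ℕ × ℕ | ((u.1 : ℝ), (u.2 : ℝ)) ∈
    convexHull ℝ {((0 : ℝ), (0 : ℝ)), ((d : ℝ), 0), ((d : ℝ), (e : ℝ) + r * d),
      (0, (e : ℝ))}}

/-!
Write `f = ∑ᵢ xⁱ cᵢ(y)` with `i ≤ d` and `deg cᵢ ≤ e + r i`, and let `i₀` be the least `i` with
`cᵢ ≠ 0`. The polynomial `c_{i₀}` vanishes at `s ≤ e + r i₀` points `b ∈ Fˣ`, each contributing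
at most `q - 1` zeros of `f`. For every other `b`, `f(x, b)` is `x^{i₀}` times a nonzero
polynomial of degree at most `d - i₀`, so it has at most `d - i₀` zeros in `Fˣ`.
The bound `s (q - 1) + (q - 1 - s)(d - i₀)` is increasing in `s` and, at `s = e + r i₀`, convex
in `i₀`, so it never exceeds its values at `i₀ = 0` and `i₀ = d`, which are the two terms of the
maximum.
-/

open Finset

theorem card_filter_prod_le_of_fiber_le {α β : Type*} [Fintype α] [Fintype β]
    (p : α × β → Prop) [DecidablePred p] (T : Finset β) (k : ℕ)
    (hk : ∀ b ∉ T, #{a | p (a, b)} ≤ k) :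
    #{t | p t} ≤ #T * Fintype.card α + (Fintype.card β - #T) * k := by
  classical
  have hfiber : #{t | p t} = ∑ b, #{a | p (a, b)} := by
    simp only [card_filter, Fintype.sum_prod_type_right]
  rw [hfiber, ← sum_add_sum_compl T, ← card_compl]
  gcongr
  · simpa using sum_le_card_nsmul T _ _ fun b _ => card_le_univ {a | p (a, b)}
  · simpa using sum_le_card_nsmul Tᶜ _ _ fun b hb => hk b (mem_compl.mp hb)

theorem hirzebruch_count_le_max {n d e r i s : ℕ} (hd : 0 < d) (hdn : d < n) (hi : i ≤ d)
    (hsn : s ≤ n) (hs : s ≤ e + r * i) :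
    s * n + (n - s) * (d - i) ≤ max (d * n + (n - d) * e) (n * (e + d * r)) := by
  set A := d * n + (n - d) * e
  set B := n * (e + d * r)
  have hconvex : d * (s * n + (n - s) * (d - i)) ≤ (d - i) * A + i * B := by
    have h : (0 : ℤ) ≤ d * ((e + r * i - s) * (n - d + i) + r * i * (d - i)) := by
      have : (0 : ℤ) ≤ d - i := by omega
      have : (0 : ℤ) ≤ e + r * i - s := by omega
      have : (0 : ℤ) ≤ n - d + i := by omega
      positivity
    simp only [A, B]
    zify [hi, hsn, hdn.le]
    linear_combination h
  refine Nat.le_of_mul_le_mul_left (hconvex.trans ?_) hd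
  calc (d - i) * A + i * B ≤ (d - i) * max A B + i * max A B := by gcongr <;> simp
    _ = d * max A B := by rw [← add_mul, Nat.sub_add_cancel hi]

namespace Polynomial

section FiniteField

variable {F : Type*} [Field F] [Fintype F] [DecidableEq F]

theorem card_units_eval_eq_zero_le_natDegree (p : F[X]) (hp : p ≠ 0) :
    #{a : Fˣ | p.eval (a : F) = 0} ≤ p.natDegree :=
  calc #{a : Fˣ | p.eval (a : F) = 0} ≤ #p.roots.toFinset :=
        card_le_card_of_injOn Units.val (fun a ha => by simp_all) Units.val_injective.injOn
    _ ≤ p.natDegree := (Multiset.toFinset_card_le _).trans (card_roots' p)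

theorem card_units_eval_eq_zero_le_natDegree_sub_natTrailingDegree (p : F[X]) (hp : p ≠ 0) :
    #{a : Fˣ | p.eval (a : F) = 0} ≤ p.natDegree - p.natTrailingDegree := by
  set k := p.natTrailingDegree
  obtain ⟨q, hq⟩ : X ^ k ∣ p := X_pow_dvd_iff.mpr fun _ => coeff_eq_zero_of_lt_natTrailingDegree
  have hq0 : q ≠ 0 := by rintro rfl; exact hp (by simpa using hq)
  have hdeg : p.natDegree = k + q.natDegree := by
    rw [hq, natDegree_mul (pow_ne_zero _ X_ne_zero) hq0, natDegree_X_pow]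
  have hzeros : ∀ a : Fˣ, p.eval (a : F) = 0 ↔ q.eval (a : F) = 0 := by simp [hq]
  simpa [hzeros, hdeg] using card_units_eval_eq_zero_le_natDegree q hq0

theorem card_torus_zeros_le_of_trailingCoeff (g : F[X][X]) :
    #{t : Fˣ × Fˣ | (g.map (evalRingHom (t.2 : F))).eval (t.1 : F) = 0} ≤
      #{b : Fˣ | g.trailingCoeff.eval (b : F) = 0} * Fintype.card Fˣ +
        (Fintype.card Fˣ - #{b : Fˣ | g.trailingCoeff.eval (b : F) = 0}) *
          (g.natDegree - g.natTrailingDegree) := by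
  refine card_filter_prod_le_of_fiber_le _ _ _ fun b hb => ?_
  set P := g.map (evalRingHom (b : F))
  have hcoeff : P.coeff g.natTrailingDegree ≠ 0 := by
    simpa [P, coeff_map, trailingCoeff] using (mem_filter_univ b).not.mp hb
  have hP0 : P ≠ 0 := fun h => hcoeff (by rw [h, coeff_zero])
  have htrail : g.natTrailingDegree ≤ P.natTrailingDegree :=
    le_natTrailingDegree hP0 fun m hm => by
      simp [P, coeff_map, coeff_eq_zero_of_lt_natTrailingDegree hm]
  have hdeg : P.natDegree ≤ g.natDegree := natDegree_map_le
  exact (card_units_eval_eq_zero_le_natDegree_sub_natTrailingDegree P hP0).trans (by omega)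

end FiniteField

variable {F : Type*} [Field F]

variable (F) in
def hirzebruchSubmodule (d e r : ℕ) : Submodule F F[X][X] where
  carrier := {q | q.natDegree ≤ d ∧ ∀ i, (q.coeff i).natDegree ≤ e + r * i}
  add_mem' {p q} hp hq :=
    ⟨(natDegree_add_le p q).trans (max_le hp.1 hq.1), fun i => by
      simpa only [coeff_add] using (natDegree_add_le _ _).trans (max_le (hp.2 i) (hq.2 i))⟩
  zero_mem' := by simp
  smul_mem' c q hq :=
    ⟨(natDegree_smul_le c q).trans hq.1, fun i => by
      simpa only [coeff_smul] using (natDegree_smul_le c _).trans (hq.2 i)⟩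

lemma X_pow_mul_C_X_pow_mem_hirzebruchSubmodule {d e r a b : ℕ} (ha : a ≤ d)
    (hb : b ≤ e + r * a) : (X ^ a * C X ^ b : F[X][X]) ∈ hirzebruchSubmodule F d e r := by
  rw [← C_pow, mul_comm]
  refine ⟨(natDegree_C_mul_X_pow_le _ _).trans ha, fun i => ?_⟩
  rw [coeff_C_mul_X_pow]
  split_ifs with hi
  · simpa [hi] using hb
  · simp

end Polynomial

section Bivariate

variable {F : Type*} [Field F]

/-- The outer variable is `X 0` and the inner one `X 1` (the reverse of
`Polynomial.Bivariate.equivMvPolynomial`), so that setting `X 1 = b` is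
`Polynomial.map (evalRingHom b)`. -/
noncomputable def toBivariate : MvPolynomial (Fin 2) F ≃ₐ[F] Polynomial (Polynomial F) :=
  (renameEquiv F (Equiv.swap 0 1)).trans (Polynomial.Bivariate.equivMvPolynomial F).symm

@[simp]
lemma toBivariate_X_zero : toBivariate (X 0 : MvPolynomial (Fin 2) F) = Polynomial.X := by
  simp [toBivariate]

@[simp]
lemma toBivariate_X_one :
    toBivariate (X 1 : MvPolynomial (Fin 2) F) = Polynomial.C Polynomial.X := by
  simp [toBivariate]

lemma torusEval_eq_eval_map_toBivariate (f : MvPolynomial (Fin 2) F) (t : Fˣ × Fˣ) :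
    torusEval F f t =
      ((toBivariate f).map (Polynomial.evalRingHom (t.2 : F))).eval (t.1 : F) := by
  induction f using MvPolynomial.induction_on with
  | C a => simp [torusEval, toBivariate]
  | add p q hp hq => simp_all
  | mul_X p i hp => fin_cases i <;> simp_all [torusEval]

lemma toBivariate_mem_hirzebruchSubmodule {d e r : ℕ} {U : Set (ℕ × ℕ)}
    (hU : ∀ u ∈ U, u.1 ≤ d ∧ u.2 ≤ e + r * u.1) {f : MvPolynomial (Fin 2) F}
    (hf : f ∈ Submodule.span F {m | ∃ u ∈ U, m = X 0 ^ u.1 * X 1 ^ u.2}) :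
    toBivariate f ∈ Polynomial.hirzebruchSubmodule F d e r := by
  refine Submodule.span_le (p := (Polynomial.hirzebruchSubmodule F d e r).comap
    toBivariate.toLinearMap) |>.mpr ?_ hf
  rintro _ ⟨u, hu, rfl⟩
  simpa using Polynomial.X_pow_mul_C_X_pow_mem_hirzebruchSubmodule (hU u hu).1 (hU u hu).2

end Bivariate

lemma fst_le_and_snd_le_of_mem_hirzU {d e r : ℕ} {u : ℕ × ℕ} (hu : u ∈ hirzU d e r) :
    u.1 ≤ d ∧ u.2 ≤ e + r * u.1 := by
  have hsub : convexHull ℝ {((0 : ℝ), (0 : ℝ)), ((d : ℝ), 0), ((d : ℝ), (e : ℝ) + r * d),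
      (0, (e : ℝ))} ⊆ {p : ℝ × ℝ | p.1 ≤ d} ∩ {p | p.2 - r * p.1 ≤ e} := by
    refine convexHull_min ?_ ((convex_halfSpace_le (LinearMap.fst ℝ ℝ ℝ).isLinear _).inter
      (convex_halfSpace_le (LinearMap.snd ℝ ℝ ℝ - (r : ℝ) • LinearMap.fst ℝ ℝ ℝ).isLinear _))
    rintro p (rfl | rfl | rfl | rfl) <;> simp
    positivity
  obtain ⟨h1, h2⟩ : (u.1 : ℝ) ≤ d ∧ (u.2 : ℝ) - r * u.1 ≤ e := hsub hu
  constructor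
  · exact_mod_cast h1
  · exact_mod_cast (by linarith : (u.2 : ℝ) ≤ e + r * u.1)

theorem hirzebruch_zero_bound_general (F : Type*) [Field F] [Fintype F] [DecidableEq F]
    (d e r : ℕ) (hd : 0 < d)
    (hdq : d < Fintype.card F - 1)
    (f : MvPolynomial (Fin 2) F)
    (hf : f ∈ Submodule.span F
      {m : MvPolynomial (Fin 2) F | ∃ u ∈ hirzU d e r, m = X 0 ^ u.1 * X 1 ^ u.2})
    (hf0 : f ≠ 0) :
    (Finset.univ.filter fun t : Fˣ × Fˣ => torusEval F f t = 0).card ≤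
      max (d * (Fintype.card F - 1) + (Fintype.card F - 1 - d) * e)
        ((Fintype.card F - 1) * (e + d * r)) := by
  set g := toBivariate f
  obtain ⟨hdeg, hcoeff⟩ : g ∈ Polynomial.hirzebruchSubmodule F d e r :=
    toBivariate_mem_hirzebruchSubmodule (fun _ => fst_le_and_snd_le_of_mem_hirzU) hf
  have hg0 : g ≠ 0 := by simpa [g] using hf0
  set i := g.natTrailingDegree
  set s := #{b : Fˣ | g.trailingCoeff.eval (b : F) = 0}
  have hs : s ≤ e + r * i :=
    (Polynomial.card_units_eval_eq_zero_le_natDegree _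
      (Polynomial.trailingCoeff_nonzero_iff_nonzero.mpr hg0)).trans (hcoeff i)
  simp only [torusEval_eq_eval_map_toBivariate]
  rw [← Fintype.card_units] at hdq ⊢
  calc _ ≤ s * Fintype.card Fˣ + (Fintype.card Fˣ - s) * (g.natDegree - i) :=
        Polynomial.card_torus_zeros_le_of_trailingCoeff g
    _ ≤ s * Fintype.card Fˣ + (Fintype.card Fˣ - s) * (d - i) := by gcongr
    _ ≤ _ := hirzebruch_count_le_max hd hdq
        ((Polynomial.natTrailingDegree_le_natDegree g).trans hdeg) (card_le_univ _) hs

/-- A nonzero polynomial supported on the lattice points of the Hirzebruch polytope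
has at most `max{d(q−1)+(q−1−d)e, (q−1)(e+dr)}` zeros on the torus `(Fˣ)²`. -/
theorem hirzebruch_zero_bound (F : Type*) [Field F] [Fintype F] [DecidableEq F]
    (d e r : ℕ) (hd : 0 < d) (he : 0 < e) (hr : 0 < r)
    (hdq : d < Fintype.card F - 1) (heq : e < Fintype.card F - 1)
    (herd : e + r * d < Fintype.card F - 1)
    (f : MvPolynomial (Fin 2) F)
    (hf : f ∈ Submodule.span F
      {m : MvPolynomial (Fin 2) F | ∃ u ∈ hirzU d e r, m = X 0 ^ u.1 * X 1 ^ u.2})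
    (hf0 : f ≠ 0) :
    (Finset.univ.filter fun t : Fˣ × Fˣ => torusEval F f t = 0).card ≤
      max (d * (Fintype.card F - 1) + (Fintype.card F - 1 - d) * e)
        ((Fintype.card F - 1) * (e + d * r)) :=
  hirzebruch_zero_bound_general F d e r hd hdq f hf hf0
end
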